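/- arXiv:2211.04820 — 3 statements merged into one kernel-verified Lean document; each statement's English description precedes it below -/
import Mathlib

section
/- Let P be a polyomino and d ≥ 1 an integer. The rook complex ℛ(P) is pure of dimension d−1 (i.e., every maximal set of pairwise non-attacking cells of P has cardinality exactly d) if and only if P admits a super partition 𝔸 with |𝔸| = d. -/
/-- A cell of the grid, identified with its lower-left corner. -/
abbrev Cell : Type := ℤ × ℤ

/-- Two cells are adjacent if they differ by `(±1,0)` or `(0,±1)`. -/
def Adjacent (c d : Cell) : Prop :=
  (c.1 = d.1 ∧ (c.2 = d.2 + 1 ∨ d.2 = c.2 + 1)) ∨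
  (c.2 = d.2 ∧ (c.1 = d.1 + 1 ∨ d.1 = c.1 + 1))

/-- A polyomino: a finite nonempty set of cells, any two of which are joined by a
path of adjacent cells inside the set. -/
def IsPolyomino (P : Finset Cell) : Prop :=
  P.Nonempty ∧ ∀ c ∈ P, ∀ d ∈ P,
    Relation.ReflTransGen (fun a b => Adjacent a b ∧ a ∈ P ∧ b ∈ P) c d

/-- A horizontal segment of consecutive cells in a row. -/
def IsHSeg (S : Finset Cell) : Prop :=
  ∃ y a b : ℤ, a ≤ b ∧ S = (Finset.Icc a b).image (fun x => (x, y))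

/-- A vertical segment of consecutive cells in a column. -/
def IsVSeg (S : Finset Cell) : Prop :=
  ∃ x a b : ℤ, a ≤ b ∧ S = (Finset.Icc a b).image (fun y => (x, y))

/-- A maximal horizontal cell interval of `P`. -/
def IsMaxHInterval (P I : Finset Cell) : Prop :=
  IsHSeg I ∧ I ⊆ P ∧ ∀ I', IsHSeg I' → I' ⊆ P → I ⊆ I' → I' = I

/-- A maximal vertical cell interval of `P`. -/
def IsMaxVInterval (P I : Finset Cell) : Prop :=
  IsVSeg I ∧ I ⊆ P ∧ ∀ I', IsVSeg I' → I' ⊆ P → I ⊆ I' → I' = I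

/-- A maximal cell interval of `P`. -/
def IsMaxInterval (P I : Finset Cell) : Prop :=
  IsMaxHInterval P I ∨ IsMaxVInterval P I

/-- Two distinct cells of `P` attack each other if they lie in a common maximal
cell interval of `P`. -/
def Attacks (P : Finset Cell) (c d : Cell) : Prop :=
  c ≠ d ∧ ∃ I, IsMaxInterval P I ∧ c ∈ I ∧ d ∈ I

/-- A set of pairwise non-attacking cells of `P` (a face of the rook complex). -/
def IsRookSet (P F : Finset Cell) : Prop :=
  F ⊆ P ∧ ∀ c ∈ F, ∀ d ∈ F, ¬ Attacks P c d

/-- A maximal set of pairwise non-attacking cells of `P` (a facet of the rook complex). -/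
def IsMaxRookSet (P F : Finset Cell) : Prop :=
  IsRookSet P F ∧ ∀ G, IsRookSet P G → F ⊆ G → G = F

/-- An interval `I` is embedded if some set `F` of pairwise non-attacking cells,
disjoint from `I`, attacks every cell of `I`. -/
def IsEmbedded (P I : Finset Cell) : Prop :=
  ∃ F : Finset Cell, IsRookSet P F ∧ F ∩ I = ∅ ∧ ∀ c ∈ I, ∃ f ∈ F, Attacks P f c

/-- A partition of `P`: pairwise disjoint maximal cell intervals whose union is `P`. -/
def IsPartition (P : Finset Cell) (A : Finset (Finset Cell)) : Prop :=
  (∀ I ∈ A, IsMaxInterval P I) ∧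
  (∀ I ∈ A, ∀ J ∈ A, I ≠ J → Disjoint I J) ∧
  A.biUnion id = P

/-- A super partition: a partition none of whose intervals is embedded. -/
def IsSuperPartition (P : Finset Cell) (A : Finset (Finset Cell)) : Prop :=
  IsPartition P A ∧ ∀ I ∈ A, ¬ IsEmbedded P I

/-- `P` is a square: a translate of the `n × n` block of cells for some `n ≥ 1`. -/
def IsSquareBlock (P : Finset Cell) : Prop :=
  ∃ a b n : ℤ, 1 ≤ n ∧ P = Finset.Icc a (a + n - 1) ×ˢ Finset.Icc b (b + n - 1)

/-- The graph `G_P` on the cells of `P` whose edges are the attacking pairs. -/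
def GP (P : Finset Cell) : SimpleGraph {c : Cell // c ∈ P} where
  Adj c d := Attacks P (c : Cell) (d : Cell)
  symm := by
    constructor
    rintro c d ⟨hne, I, hI, hc, hd⟩
    exact ⟨hne.symm, I, hI, hd, hc⟩
  loopless := by
    constructor
    rintro c ⟨hne, -⟩
    exact hne rfl

/-- The complement graph `Ḡ_P`. -/
def GBar (P : Finset Cell) : SimpleGraph {c : Cell // c ∈ P} := (GP P)ᶜ

/-- `G` has an induced cycle of length `n`: an injective map from `ZMod n`
whose image induces exactly the cycle adjacencies. -/
def HasInducedCycle {V : Type*} (G : SimpleGraph V) (n : ℕ) : Prop :=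
  3 ≤ n ∧ ∃ f : ZMod n → V, Function.Injective f ∧
    ∀ i j : ZMod n, G.Adj (f i) (f j) ↔ (i = j + 1 ∨ j = i + 1)

/-- A graph is chordal if it has no induced cycle of length at least 4. -/
def IsChordal {V : Type*} (G : SimpleGraph V) : Prop :=
  ∀ n, 4 ≤ n → ¬ HasInducedCycle G n

/-- `P` is simple: any two cells outside `P` are joined by a path of adjacent
cells outside `P`. -/
def IsSimple (P : Finset Cell) : Prop :=
  ∀ c d : Cell, c ∉ P → d ∉ P →
    Relation.ReflTransGen (fun a b => Adjacent a b ∧ a ∉ P ∧ b ∉ P) c d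

/-- `P` is thin: it contains no four cells forming a `2 × 2` square. -/
def IsThin (P : Finset Cell) : Prop :=
  ¬ ∃ a : Cell, ({a, (a.1 + 1, a.2), (a.1, a.2 + 1), (a.1 + 1, a.2 + 1)} : Finset Cell) ⊆ P

/-- A path of distinct cells of `P`, consecutive cells being adjacent. -/
def IsCellPath (P : Finset Cell) (l : List Cell) : Prop :=
  l.Nodup ∧ (∀ c ∈ l, c ∈ P) ∧ l.Chain' Adjacent

/-- The number of changes of direction of a path of cells: positions `k`
(with `1 ≤ k ≤ length - 2`) where the `(k-1)`-st and `(k+1)`-st cells differ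
in both coordinates. -/
def dirChanges (l : List Cell) : ℕ :=
  ((Finset.Ico 1 (l.length - 1)).filter (fun k =>
    (l.getD (k - 1) (0, 0)).1 ≠ (l.getD (k + 1) (0, 0)).1 ∧
    (l.getD (k - 1) (0, 0)).2 ≠ (l.getD (k + 1) (0, 0)).2)).card

/-- The eight rotations/reflections of the grid. -/
def dihedralMaps : List (Cell → Cell) :=
  [fun p => (p.1, p.2), fun p => (-p.2, p.1), fun p => (-p.1, -p.2), fun p => (p.2, -p.1),
   fun p => (p.2, p.1), fun p => (-p.1, p.2), fun p => (-p.2, -p.1), fun p => (p.1, -p.2)]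

/-- `P` is obtained from `Q` by a translation, rotation or reflection of `ℤ²`. -/
def CongruentTo (P Q : Finset Cell) : Prop :=
  ∃ g ∈ dihedralMaps, ∃ t : Cell, P = Q.image (fun p => g p + t)

/-- A brush polyomino with handle `J`. -/
def IsBrush (P J : Finset Cell) : Prop :=
  IsPolyomino P ∧ IsSimple P ∧ IsThin P ∧ IsMaxInterval P J ∧
  (∀ I, IsMaxInterval P I → 2 ≤ I.card → I ≠ J → (I ∩ J).Nonempty) ∧
  (∀ c ∈ P, c ∈ J ∨ ∃ I, IsMaxInterval P I ∧ 2 ≤ I.card ∧ c ∈ I)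

/-- A short brush polyomino: a brush all of whose bristles have at most two cells. -/
def IsShortBrush (P : Finset Cell) : Prop :=
  ∃ J, IsBrush P J ∧ ∀ I, IsMaxInterval P I → I ≠ J → I.card ≤ 2

/-- A pure brush polyomino: handle `J` of cardinality `d` together with `d`
pairwise disjoint bristles `I 0, …, I (d-1)` perpendicular to `J`, each meeting
`J`, whose union is `P`. -/
def IsPureBrush (P J : Finset Cell) (d : ℕ) (I : Fin d → Finset Cell) : Prop :=
  IsPolyomino P ∧ IsSimple P ∧ IsThin P ∧
  J.card = d ∧
  ((IsMaxHInterval P J ∧ ∀ k, IsMaxVInterval P (I k)) ∨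
   (IsMaxVInterval P J ∧ ∀ k, IsMaxHInterval P (I k))) ∧
  (∀ j k, j ≠ k → Disjoint (I j) (I k)) ∧
  (∀ k, ((I k) ∩ J).Nonempty) ∧
  Finset.univ.biUnion I = P

/-- The `k`-th elementary symmetric polynomial of `x 0, …, x (d-1)`. -/
def esymm {R : Type*} [CommRing R] {d : ℕ} (k : ℕ) (x : Fin d → R) : R :=
  ∑ s ∈ Finset.powersetCard k (Finset.univ : Finset (Fin d)), ∏ i ∈ s, x i

/-- `G_P` has an induced matching with `n` edges `{A i, B i}`. -/
def HasInducedMatching (P : Finset Cell) (n : ℕ) : Prop :=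
  ∃ A B : Fin n → Cell,
    (∀ i, Attacks P (A i) (B i)) ∧
    (∀ i j, i ≠ j → A i ≠ A j) ∧
    (∀ i j, i ≠ j → B i ≠ B j) ∧
    (∀ i j, A i ≠ B j) ∧
    (∀ i j, i ≠ j →
      ¬ Attacks P (A i) (A j) ∧ ¬ Attacks P (A i) (B j) ∧ ¬ Attacks P (B i) (B j))

/-- The induced matching number `ν(G_P)`. -/
noncomputable def matchNum (P : Finset Cell) : ℕ := sSup {n | HasInducedMatching P n}

/-- `c` is a single cell of the maximal interval `I`: the maximal interval of `P`
through `c` perpendicular to `I` is `{c}`. -/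
def IsSingleCell (P I : Finset Cell) (c : Cell) : Prop :=
  c ∈ I ∧
  ((IsMaxHInterval P I ∧ ∀ I', IsMaxVInterval P I' → c ∈ I' → I' = {c}) ∨
   (IsMaxVInterval P I ∧ ∀ I', IsMaxHInterval P I' → c ∈ I' → I' = {c}))

/-!
Rows and columns (maximal horizontal and vertical cell intervals) are the two sides of a bipartite
graph whose edges are the cells of `P`; rook sets are its matchings, and a partition is a set of
rows and columns covering every cell exactly once.

If no interval of a partition `A` is embedded, every facet `F` has exactly one cell in each
interval of `A` (an interval missed by `F` would be embedded, witnessed by `F`), so `|F| = |A|`.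

Conversely, let `ℛ(P)` be pure and fix a facet `F`. Call a row vacatable if some rook set of size
`|F|` using only the columns of `F` leaves it empty; these are the rows reachable from the empty
rows by `F`-alternating paths. Covering each cell by its column when its row is vacatable and by
its row otherwise gives König's vertex cover. Purity makes it a partition: a cell in the column
of a vacatable row lies in a vacatable row, since otherwise an exchange produces a facet with
`|F| - 1` rooks. Each of its intervals contains a rook of `F`, so it has `|F|` intervals. Finally,
for pure `ℛ(P)` a partition into `d` intervals is super: a facet avoiding an embedded interval
would fit into the remaining `d - 1` intervals.
-/

open Finset

section Segment

variable {emb : ℤ → ℤ → Cell} {P I : Finset Cell} {k t : ℤ}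

/-- Segments of the lines `emb k` of a family of lines `emb : ℤ → ℤ → Cell`: horizontal segments
are the case `emb = fun y x => (x, y)`, vertical ones the case `emb = Prod.mk`. -/
def IsSegOf (emb : ℤ → ℤ → Cell) (S : Finset Cell) : Prop :=
  ∃ k a b : ℤ, a ≤ b ∧ S = (Icc a b).image (emb k)

def IsMaxSegOf (emb : ℤ → ℤ → Cell) (P I : Finset Cell) : Prop :=
  IsSegOf emb I ∧ I ⊆ P ∧ ∀ I', IsSegOf emb I' → I' ⊆ P → I ⊆ I' → I' = I

abbrev segParams (emb : ℤ → ℤ → Cell) (P : Finset Cell) (k t : ℤ) : Set ℤ :=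
  (emb k ⁻¹' P).ordConnectedComponent t

noncomputable def segThrough (emb : ℤ → ℤ → Cell) (P : Finset Cell) (k t : ℤ) : Finset Cell :=
  (Icc (sInf (segParams emb P k t)) (sSup (segParams emb P k t))).image (emb k)

theorem segParams_eq_Icc (hemb : Function.Injective2 emb) (h : emb k t ∈ P) :
    segParams emb P k t = Set.Icc (sInf (segParams emb P k t)) (sSup (segParams emb P k t)) := by
  have hfin : (segParams emb P k t).Finite :=
    (P.finite_toSet.preimage (hemb.right k).injOn).subset Set.ordConnectedComponent_subset
  have hne : (segParams emb P k t).Nonempty := ⟨t, Set.self_mem_ordConnectedComponent.2 h⟩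
  exact (hne.ordConnected_iff_of_bdd hfin.bddBelow hfin.bddAbove).1 inferInstance

theorem mem_segThrough_iff (hemb : Function.Injective2 emb) (h : emb k t ∈ P) {c : Cell} :
    c ∈ segThrough emb P k t ↔ ∃ s ∈ segParams emb P k t, emb k s = c := by
  conv_rhs => rw [segParams_eq_Icc hemb h]
  simp [segThrough]

theorem subset_segThrough (hemb : Function.Injective2 emb) (h : emb k t ∈ P) {J : Finset Cell}
    (hJ : IsSegOf emb J) (hJP : J ⊆ P) (hJt : emb k t ∈ J) : J ⊆ segThrough emb P k t := by
  obtain ⟨k', a, b, -, rfl⟩ := hJ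
  obtain ⟨s, hs, hst⟩ := mem_image.1 hJt
  obtain ⟨rfl, rfl⟩ := hemb hst.symm
  have hab : Set.Icc a b ⊆ segParams emb P k t :=
    Set.subset_ordConnectedComponent (by simpa using hs)
      fun u hu => hJP (mem_image_of_mem (emb k) (mem_Icc.2 hu))
  intro c hc
  obtain ⟨u, hu, rfl⟩ := mem_image.1 hc
  exact (mem_segThrough_iff hemb h).2 ⟨u, hab (by simpa using hu), rfl⟩

theorem mem_segThrough (hemb : Function.Injective2 emb) (h : emb k t ∈ P) :
    emb k t ∈ segThrough emb P k t :=
  (mem_segThrough_iff hemb h).2 ⟨t, Set.self_mem_ordConnectedComponent.2 h, rfl⟩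

theorem isMaxSegOf_segThrough (hemb : Function.Injective2 emb) (h : emb k t ∈ P) :
    IsMaxSegOf emb P (segThrough emb P k t) := by
  have hmem := mem_segThrough hemb h
  refine ⟨⟨k, _, _, ?_, rfl⟩, ?_, fun J hJ hJP hsub => ?_⟩
  · obtain ⟨s, hs, -⟩ := (mem_segThrough_iff hemb h).1 hmem
    rw [segParams_eq_Icc hemb h] at hs
    exact hs.1.trans hs.2
  · intro c hc
    obtain ⟨s, hs, rfl⟩ := (mem_segThrough_iff hemb h).1 hc
    exact Set.ordConnectedComponent_subset (s := emb k ⁻¹' P) hs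
  · exact (subset_segThrough hemb h hJ hJP (hsub hmem)).antisymm hsub

theorem IsMaxSegOf.eq_segThrough (hemb : Function.Injective2 emb) (hI : IsMaxSegOf emb P I)
    (ht : emb k t ∈ I) : I = segThrough emb P k t :=
  have hseg := isMaxSegOf_segThrough hemb (hI.2.1 ht)
  (hI.2.2 _ hseg.1 hseg.2.1 (subset_segThrough hemb (hI.2.1 ht) hI.1 hI.2.1 ht)).symm

end Segment

section Lines

variable {P I : Finset Cell} {a b c : Cell}

theorem injective2_row : Function.Injective2 (fun y x => ((x, y) : Cell)) :=
  fun _ _ _ _ h => (Prod.mk.inj h).symm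

theorem injective2_col : Function.Injective2 (Prod.mk : ℤ → ℤ → Cell) :=
  fun _ _ _ _ h => Prod.mk.inj h

-- `rowInterval P c` and `colInterval P c` are the maximal intervals through `c` only if `c ∈ P`.
noncomputable def rowInterval (P : Finset Cell) (c : Cell) : Finset Cell :=
  segThrough (fun y x => (x, y)) P c.2 c.1

noncomputable def colInterval (P : Finset Cell) (c : Cell) : Finset Cell :=
  segThrough Prod.mk P c.1 c.2

theorem isMaxHInterval_rowInterval (hc : c ∈ P) : IsMaxHInterval P (rowInterval P c) :=
  isMaxSegOf_segThrough injective2_row hc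

theorem isMaxVInterval_colInterval (hc : c ∈ P) : IsMaxVInterval P (colInterval P c) :=
  isMaxSegOf_segThrough injective2_col hc

theorem mem_rowInterval_self (hc : c ∈ P) : c ∈ rowInterval P c :=
  mem_segThrough injective2_row hc

theorem mem_colInterval_self (hc : c ∈ P) : c ∈ colInterval P c :=
  mem_segThrough injective2_col hc

theorem IsMaxHInterval.eq_rowInterval (hI : IsMaxHInterval P I) (hc : c ∈ I) :
    I = rowInterval P c :=
  IsMaxSegOf.eq_segThrough injective2_row hI hc

theorem IsMaxVInterval.eq_colInterval (hI : IsMaxVInterval P I) (hc : c ∈ I) :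
    I = colInterval P c :=
  IsMaxSegOf.eq_segThrough injective2_col hI hc

theorem snd_eq_of_mem_rowInterval (h : a ∈ rowInterval P c) : a.2 = c.2 := by
  obtain ⟨s, -, rfl⟩ := mem_image.1 h
  rfl

theorem fst_eq_of_mem_colInterval (h : a ∈ colInterval P c) : a.1 = c.1 := by
  obtain ⟨s, -, rfl⟩ := mem_image.1 h
  rfl

theorem mem_rowInterval_iff (hc : c ∈ P) :
    a ∈ rowInterval P c ↔ a ∈ P ∧ rowInterval P a = rowInterval P c := by
  refine ⟨fun ha => ⟨(isMaxHInterval_rowInterval hc).2.1 ha, ?_⟩, fun ⟨ha, h⟩ => ?_⟩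
  · exact ((isMaxHInterval_rowInterval hc).eq_rowInterval ha).symm
  · exact h ▸ mem_rowInterval_self ha

theorem mem_colInterval_iff (hc : c ∈ P) :
    a ∈ colInterval P c ↔ a ∈ P ∧ colInterval P a = colInterval P c := by
  refine ⟨fun ha => ⟨(isMaxVInterval_colInterval hc).2.1 ha, ?_⟩, fun ⟨ha, h⟩ => ?_⟩
  · exact ((isMaxVInterval_colInterval hc).eq_colInterval ha).symm
  · exact h ▸ mem_colInterval_self ha

theorem eq_of_rowInterval_eq_of_colInterval_eq (ha : a ∈ P)
    (hrow : rowInterval P a = rowInterval P b) (hcol : colInterval P a = colInterval P b) :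
    a = b := by
  have h2 := snd_eq_of_mem_rowInterval (hrow ▸ mem_rowInterval_self ha)
  have h1 := fst_eq_of_mem_colInterval (hcol ▸ mem_colInterval_self ha)
  exact Prod.ext h1 h2

theorem IsMaxInterval.subset (hI : IsMaxInterval P I) : I ⊆ P :=
  hI.elim (·.2.1) (·.2.1)

theorem attacks_iff (ha : a ∈ P) (hb : b ∈ P) :
    Attacks P a b ↔
      a ≠ b ∧ (rowInterval P a = rowInterval P b ∨ colInterval P a = colInterval P b) := by
  refine ⟨fun ⟨hne, I, hI, haI, hbI⟩ => ⟨hne, ?_⟩, fun ⟨hne, h⟩ => ⟨hne, ?_⟩⟩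
  · rcases hI with hI | hI
    · exact .inl ((hI.eq_rowInterval haI).symm.trans (hI.eq_rowInterval hbI))
    · exact .inr ((hI.eq_colInterval haI).symm.trans (hI.eq_colInterval hbI))
  · rcases h with h | h
    · exact ⟨_, .inl (isMaxHInterval_rowInterval hb), h ▸ mem_rowInterval_self ha,
        mem_rowInterval_self hb⟩
    · exact ⟨_, .inr (isMaxVInterval_colInterval hb), h ▸ mem_colInterval_self ha,
        mem_colInterval_self hb⟩

end Lines

section RookSets

variable {P G F W : Finset Cell} {a b c : Cell}

theorem IsRookSet.mono (hG : IsRookSet P G) (h : F ⊆ G) : IsRookSet P F :=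
  ⟨h.trans hG.1, fun x hx y hy => hG.2 x (h hx) y (h hy)⟩

theorem IsRookSet.rowInterval_ne (hG : IsRookSet P G) (ha : a ∈ G) (hb : b ∈ G) (hab : a ≠ b) :
    rowInterval P a ≠ rowInterval P b := fun h =>
  hG.2 a ha b hb ((attacks_iff (hG.1 ha) (hG.1 hb)).2 ⟨hab, .inl h⟩)

theorem IsRookSet.colInterval_ne (hG : IsRookSet P G) (ha : a ∈ G) (hb : b ∈ G) (hab : a ≠ b) :
    colInterval P a ≠ colInterval P b := fun h =>
  hG.2 a ha b hb ((attacks_iff (hG.1 ha) (hG.1 hb)).2 ⟨hab, .inr h⟩)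

theorem IsRookSet.insert_of_free (hG : IsRookSet P G) (hc : c ∈ P)
    (hrow : ∀ g ∈ G, rowInterval P g ≠ rowInterval P c)
    (hcol : ∀ g ∈ G, colInterval P g ≠ colInterval P c) : IsRookSet P (insert c G) := by
  have hfree : ∀ g ∈ G, ¬ Attacks P g c := fun g hg h => by
    rcases ((attacks_iff (hG.1 hg) hc).1 h).2 with h | h
    exacts [hrow g hg h, hcol g hg h]
  refine ⟨insert_subset hc hG.1, ?_⟩
  simp only [mem_insert, forall_eq_or_imp]
  refine ⟨⟨fun h => h.1 rfl, fun g hg h => hfree g hg ⟨h.1.symm, ?_⟩⟩,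
    fun g hg => ⟨hfree g hg, hG.2 g hg⟩⟩
  obtain ⟨-, I, hI, hc, hg⟩ := h
  exact ⟨I, hI, hg, hc⟩

theorem card_insert_of_rowInterval_ne (hrow : ∀ g ∈ G, rowInterval P g ≠ rowInterval P c) :
    (insert c G).card = G.card + 1 :=
  card_insert_of_notMem fun hc => hrow c hc rfl

theorem isMaxRookSet_iff_maximal : IsMaxRookSet P G ↔ Maximal (IsRookSet P) G :=
  ⟨fun h => ⟨h.1, fun _ hF hGF => (h.2 _ hF hGF).le⟩,
    fun h => ⟨h.1, fun _ hF hGF => (h.2 hF hGF).antisymm hGF⟩⟩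

theorem IsRookSet.exists_isMaxRookSet_superset (hW : IsRookSet P W) :
    ∃ G, W ⊆ G ∧ IsMaxRookSet P G := by
  have hfin : {G | IsRookSet P G}.Finite :=
    P.powerset.finite_toSet.subset fun G hG => mem_powerset.2 hG.1
  obtain ⟨G, hWG, hG⟩ := hfin.exists_le_maximal hW
  exact ⟨G, hWG, isMaxRookSet_iff_maximal.2 hG⟩

theorem IsRookSet.exists_insert_of_not_isMaxRookSet (hG : IsRookSet P G)
    (hmax : ¬ IsMaxRookSet P G) : ∃ z ∈ P, z ∉ G ∧ IsRookSet P (insert z G) := by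
  obtain ⟨F, hF, hGF, hne⟩ : ∃ F, IsRookSet P F ∧ G ⊆ F ∧ F ≠ G := by
    simpa [IsMaxRookSet, hG] using hmax
  obtain ⟨z, hzF, hzG⟩ := not_subset.1 fun h => hne (h.antisymm hGF)
  exact ⟨z, hF.1 hzF, hzG, hF.mono (insert_subset hzF hGF)⟩

theorem IsMaxRookSet.exists_attacks (hF : IsMaxRookSet P F) (hc : c ∈ P) (hcF : c ∉ F) :
    ∃ f ∈ F, Attacks P f c := by
  by_contra! h
  have hfree (f) (hf : f ∈ F) :
      rowInterval P f ≠ rowInterval P c ∧ colInterval P f ≠ colInterval P c :=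
    not_or.1 fun hline =>
      h f hf ((attacks_iff (hF.1.1 hf) hc).2 ⟨ne_of_mem_of_not_mem hf hcF, hline⟩)
  have := hF.2 _ (hF.1.insert_of_free hc (fun f hf => (hfree f hf).1) fun f hf => (hfree f hf).2)
    (subset_insert c F)
  exact hcF (this ▸ mem_insert_self c F)

end RookSets

/-- The rook complex `ℛ(P)` is pure of dimension `d - 1`. -/
def IsRookPure (P : Finset Cell) (d : ℕ) : Prop :=
  ∀ F, IsMaxRookSet P F → F.card = d

section Counting

variable {P F G : Finset Cell} {A B : Finset (Finset Cell)} {d : ℕ}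

theorem IsRookSet.card_le_of_subset_biUnion (hG : IsRookSet P G)
    (hB : ∀ I ∈ B, IsMaxInterval P I) (hGB : G ⊆ B.biUnion id) : G.card ≤ B.card :=
  card_le_card_of_forall_subsingleton (· ∈ ·) (fun g hg => by simpa using hGB hg)
    fun I hI g ⟨hg, hgI⟩ g' ⟨hg', hg'I⟩ =>
      by_contra fun hne => hG.2 g hg g' hg' ⟨hne, I, hB I hI, hgI, hg'I⟩

theorem IsPartition.card_eq (hA : IsPartition P A) (hF : IsRookSet P F)
    (hmeet : ∀ I ∈ A, ∃ f ∈ F, f ∈ I) : F.card = A.card :=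
  (hF.card_le_of_subset_biUnion hA.1 (hA.2.2 ▸ hF.1)).antisymm <|
    card_le_card_of_forall_subsingleton (fun I f => f ∈ I) hmeet
      fun _ _ I ⟨hI, hfI⟩ J ⟨hJ, hfJ⟩ =>
        by_contra fun hne => disjoint_left.1 (hA.2.1 I hI J hJ hne) hfI hfJ

theorem IsSuperPartition.isRookPure (hA : IsSuperPartition P A) : IsRookPure P A.card := by
  intro F hF
  refine hA.1.card_eq hF.1 fun I hI => ?_
  by_contra! hIF
  refine hA.2 I hI ⟨F, hF.1, disjoint_iff_inter_eq_empty.1 (disjoint_left.2 hIF), fun c hc => ?_⟩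
  exact hF.exists_attacks ((hA.1.1 I hI).subset hc) fun hcF => hIF c hcF hc

theorem IsRookPure.card_le (h : IsRookPure P d) (hG : IsRookSet P G) : G.card ≤ d := by
  obtain ⟨F, hGF, hF⟩ := hG.exists_isMaxRookSet_superset
  exact h F hF ▸ card_le_card hGF

theorem IsRookPure.isSuperPartition (h : IsRookPure P d) (hA : IsPartition P A)
    (hcard : A.card = d) : IsSuperPartition P A := by
  refine ⟨hA, fun I hI ⟨E, hE, _, hatt⟩ => ?_⟩
  obtain ⟨G, hEG, hG⟩ := hE.exists_isMaxRookSet_superset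
  have hGI : G ⊆ (A.erase I).biUnion id := by
    intro g hg
    obtain ⟨J, hJ, hgJ⟩ := mem_biUnion.1 (hA.2.2 ▸ hG.1.1 hg : g ∈ A.biUnion id)
    refine mem_biUnion.2 ⟨J, mem_erase.2 ⟨?_, hJ⟩, hgJ⟩
    rintro rfl
    obtain ⟨e, he, heg⟩ := hatt g hgJ
    exact hG.1.2 e (hEG he) g hg heg
  have hle := hG.1.card_le_of_subset_biUnion (fun J hJ => hA.1 J (mem_of_mem_erase hJ)) hGI
  rw [h G hG, card_erase_of_mem hI, hcard] at hle
  have : 0 < d := hcard ▸ card_pos.2 ⟨I, hI⟩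
  omega

end Counting

section VacatableRows

variable {P F G H : Finset Cell} {b c f g x z : Cell}

def IsColumnVariant (P F G : Finset Cell) : Prop :=
  IsRookSet P G ∧ G.card = F.card ∧ ∀ g ∈ G, ∃ f ∈ F, colInterval P f = colInterval P g

def CanVacateRow (P F : Finset Cell) (c : Cell) : Prop :=
  ∃ G, IsColumnVariant P F G ∧ ∀ g ∈ G, rowInterval P g ≠ rowInterval P c

theorem canVacateRow_congr (h : rowInterval P b = rowInterval P c) :
    CanVacateRow P F b ↔ CanVacateRow P F c := by
  unfold CanVacateRow
  rw [h]

theorem IsColumnVariant.exists_colInterval_eq (hpure : IsRookPure P F.card)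
    (hG : IsColumnVariant P F G) (hc : c ∈ P) (hrow : ∀ g ∈ G, rowInterval P g ≠ rowInterval P c) :
    ∃ g ∈ G, colInterval P g = colInterval P c := by
  by_contra! hcol
  have := hpure.card_le (hG.1.insert_of_free hc hrow hcol)
  rw [card_insert_of_rowInterval_ne hrow, hG.2.1] at this
  omega

theorem IsColumnVariant.exchange (hG : IsColumnVariant P F G) (hc : c ∈ P)
    (hrow : ∀ g ∈ G, rowInterval P g ≠ rowInterval P c) (hf : f ∈ G)
    (hcol : colInterval P f = colInterval P c) :
    IsColumnVariant P F (insert c (G.erase f)) ∧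
      ∀ g ∈ insert c (G.erase f), rowInterval P g ≠ rowInterval P f := by
  have hrow' : ∀ g ∈ G.erase f, rowInterval P g ≠ rowInterval P c :=
    fun g hg => hrow g (mem_of_mem_erase hg)
  refine ⟨⟨?_, ?_, ?_⟩, ?_⟩
  · refine (hG.1.mono (erase_subset f G)).insert_of_free hc hrow' fun g hg => ?_
    exact hcol ▸ hG.1.colInterval_ne (mem_of_mem_erase hg) hf (ne_of_mem_erase hg)
  · rw [card_insert_of_rowInterval_ne hrow', card_erase_add_one hf, hG.2.1]
  · simp only [mem_insert, forall_eq_or_imp]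
    exact ⟨hcol ▸ hG.2.2 f hf, fun g hg => hG.2.2 g (mem_of_mem_erase hg)⟩
  · simp only [mem_insert, forall_eq_or_imp]
    exact ⟨(hrow f hf).symm,
      fun g hg => hG.1.rowInterval_ne (mem_of_mem_erase hg) hf (ne_of_mem_erase hg)⟩

theorem IsColumnVariant.canVacateRow_of_free (hpure : IsRookPure P F.card)
    (hH : IsColumnVariant P F H) (hg : g ∈ H) (hz : z ∈ P)
    (hrow : ∀ h ∈ H, rowInterval P h ≠ rowInterval P z)
    (hcol : ∀ h ∈ H, h ≠ g → colInterval P h ≠ colInterval P z) : CanVacateRow P F g := by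
  obtain ⟨h, hh, hhz⟩ := hH.exists_colInterval_eq hpure hz hrow
  obtain rfl : h = g := by_contra fun hne => hcol h hh hne hhz
  exact ⟨_, hH.exchange hz hrow hh hhz⟩

/-- `z` extends the rook set `(G \ {f, g}) ∪ {x}`, which is too small to be a facet. -/
theorem IsRookSet.exists_free_of_trade (hpure : IsRookPure P G.card) (hG : IsRookSet P G)
    (hf : f ∈ G) (hg : g ∈ G) (hgf : g ≠ f) (hx : x ∈ P)
    (hgx : rowInterval P g = rowInterval P x) (hfx : colInterval P f = colInterval P x) :
    ∃ z ∈ P, rowInterval P x ≠ rowInterval P z ∧ colInterval P x ≠ colInterval P z ∧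
      ∀ h ∈ G, h ≠ f → h ≠ g →
        rowInterval P h ≠ rowInterval P z ∧ colInterval P h ≠ colInterval P z := by
  set G₀ := (G.erase f).erase g with hG₀
  have hG₀G : G₀ ⊆ G := (erase_subset _ _).trans (erase_subset _ _)
  have hE : IsRookSet P (insert x G₀) := by
    refine (hG.mono hG₀G).insert_of_free hx (fun h hh => hgx ▸ ?_) fun h hh => hfx ▸ ?_
    · exact hG.rowInterval_ne (hG₀G hh) hg (ne_of_mem_erase hh)
    · exact hG.colInterval_ne (hG₀G hh) hf (ne_of_mem_erase (mem_of_mem_erase hh))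
  have hEcard : (insert x G₀).card + 1 = G.card := by
    rw [card_insert_of_notMem, hG₀, card_erase_of_mem (mem_erase.2 ⟨hgf, hg⟩),
      card_erase_of_mem hf]
    · have : 2 ≤ G.card := by
        simpa [card_pair hgf] using card_le_card (insert_subset hg (singleton_subset_iff.2 hf))
      omega
    · exact fun hxG₀ => hG.rowInterval_ne (hG₀G hxG₀) hg (ne_of_mem_erase hxG₀) hgx.symm
  obtain ⟨z, hzP, hzE, hzins⟩ := hE.exists_insert_of_not_isMaxRookSet fun hmax => by
    have := hpure _ hmax
    omega
  have hfree (h) (hh : h ∈ insert x G₀) :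
      rowInterval P h ≠ rowInterval P z ∧ colInterval P h ≠ colInterval P z :=
    have hhz : h ≠ z := fun h' => hzE (h' ▸ hh)
    ⟨hzins.rowInterval_ne (mem_insert_of_mem hh) (mem_insert_self z _) hhz,
      hzins.colInterval_ne (mem_insert_of_mem hh) (mem_insert_self z _) hhz⟩
  exact ⟨z, hzP, (hfree x (mem_insert_self x G₀)).1, (hfree x (mem_insert_self x G₀)).2,
    fun h hh hhf hhg => hfree h (mem_insert_of_mem (mem_erase.2 ⟨hhg, mem_erase.2 ⟨hhf, hh⟩⟩))⟩

theorem CanVacateRow.of_colInterval_eq (hpure : IsRookPure P F.card) (hb : CanVacateRow P F b)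
    (hbP : b ∈ P) (hx : x ∈ P) (hcol : colInterval P x = colInterval P b) :
    CanVacateRow P F x := by
  obtain ⟨G, hG, hbG⟩ := hb
  obtain ⟨f, hf, hfb⟩ := hG.exists_colInterval_eq hpure hbP hbG
  by_cases hxG : ∀ g ∈ G, rowInterval P g ≠ rowInterval P x
  · exact ⟨G, hG, hxG⟩
  obtain ⟨g, hg, hgx⟩ : ∃ g ∈ G, rowInterval P g = rowInterval P x := by simpa using hxG
  have hfx : colInterval P f = colInterval P x := hfb.trans hcol.symm
  by_cases hgf : g = f
  · subst hgf
    rw [eq_of_rowInterval_eq_of_colInterval_eq hx hgx.symm hfx.symm]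
    exact ⟨_, hG.exchange hbP hbG hg hfb⟩
  obtain ⟨z, hzP, hxz_row, hxz_col, hz⟩ :=
    hG.1.exists_free_of_trade (hG.2.1 ▸ hpure) hf hg hgf hx hgx hfx
  rw [← canVacateRow_congr hgx]
  by_cases hzf : rowInterval P z = rowInterval P f
  · have hG' := hG.exchange hbP hbG hf hfb
    refine hG'.1.canVacateRow_of_free hpure (mem_insert_of_mem (mem_erase.2 ⟨hgf, hg⟩)) hzP
      (fun h hh => hzf ▸ hG'.2 h hh) ?_
    simp only [mem_insert, forall_eq_or_imp]
    exact ⟨fun _ => hcol ▸ hxz_col,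
      fun h hh hhg => (hz h (mem_of_mem_erase hh) (ne_of_mem_erase hh) hhg).2⟩
  · refine hG.canVacateRow_of_free hpure hg hzP (fun h hh => ?_) fun h hh hhg => ?_
    · by_cases hhf : h = f
      · exact hhf ▸ Ne.symm hzf
      by_cases hhg : h = g
      · exact hhg ▸ hgx ▸ hxz_row
      exact (hz h hh hhf hhg).1
    · by_cases hhf : h = f
      · exact hhf ▸ hfx ▸ hxz_col
      exact (hz h hh hhf hhg).2

end VacatableRows

section KonigCover

variable {P F : Finset Cell} {c x : Cell} {d : ℕ}

open Classical in
noncomputable def coverInterval (P F : Finset Cell) (c : Cell) : Finset Cell :=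
  if CanVacateRow P F c then colInterval P c else rowInterval P c

theorem isMaxInterval_coverInterval (hc : c ∈ P) : IsMaxInterval P (coverInterval P F c) := by
  unfold coverInterval
  split_ifs
  exacts [.inr (isMaxVInterval_colInterval hc), .inl (isMaxHInterval_rowInterval hc)]

theorem mem_coverInterval_self (hc : c ∈ P) : c ∈ coverInterval P F c := by
  unfold coverInterval
  split_ifs
  exacts [mem_colInterval_self hc, mem_rowInterval_self hc]

theorem coverInterval_eq_of_mem (hpure : IsRookPure P F.card) (hc : c ∈ P)
    (hx : x ∈ coverInterval P F c) : coverInterval P F x = coverInterval P F c := by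
  unfold coverInterval at *
  by_cases hvc : CanVacateRow P F c
  · rw [if_pos hvc] at hx ⊢
    obtain ⟨hxP, hxc⟩ := (mem_colInterval_iff hc).1 hx
    rw [if_pos (hvc.of_colInterval_eq hpure hc hxP hxc), hxc]
  · rw [if_neg hvc] at hx ⊢
    obtain ⟨hxP, hxc⟩ := (mem_rowInterval_iff hc).1 hx
    rw [if_neg fun hvx => hvc ((canVacateRow_congr hxc).1 hvx), hxc]

theorem exists_mem_coverInterval (hpure : IsRookPure P F.card) (hF : IsRookSet P F)
    (hc : c ∈ P) : ∃ f ∈ F, f ∈ coverInterval P F c := by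
  unfold coverInterval
  split_ifs with hvc
  · obtain ⟨G, hG, hcG⟩ := hvc
    obtain ⟨g, hg, hgc⟩ := hG.exists_colInterval_eq hpure hc hcG
    obtain ⟨f, hf, hfg⟩ := hG.2.2 g hg
    exact ⟨f, hf, (mem_colInterval_iff hc).2 ⟨hF.1 hf, hfg.trans hgc⟩⟩
  · have : ¬ ∀ f ∈ F, rowInterval P f ≠ rowInterval P c :=
      fun h => hvc ⟨F, ⟨hF, rfl, fun f hf => ⟨f, hf, rfl⟩⟩, h⟩
    push Not at this
    obtain ⟨f, hf, hfc⟩ := this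
    exact ⟨f, hf, (mem_rowInterval_iff hc).2 ⟨hF.1 hf, hfc⟩⟩

theorem isPartition_image_coverInterval (hpure : IsRookPure P F.card) :
    IsPartition P (P.image (coverInterval P F)) := by
  refine ⟨forall_mem_image.2 fun c hc => isMaxInterval_coverInterval hc,
    forall_mem_image.2 fun a ha => forall_mem_image.2 fun b hb hne => ?_, ?_⟩
  · refine disjoint_left.2 fun x hxa hxb => hne ?_
    rw [← coverInterval_eq_of_mem hpure ha hxa, coverInterval_eq_of_mem hpure hb hxb]
  · refine (biUnion_subset.2 ?_).antisymm fun c hc => mem_biUnion.2 ?_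
    · exact forall_mem_image.2 fun c hc => (isMaxInterval_coverInterval hc).subset
    · exact ⟨_, mem_image_of_mem _ hc, mem_coverInterval_self hc⟩

theorem IsRookPure.exists_isPartition_card_eq (hpure : IsRookPure P d) :
    ∃ A, IsPartition P A ∧ A.card = d := by
  obtain ⟨F, -, hF⟩ := (show IsRookSet P ∅ by simp [IsRookSet]).exists_isMaxRookSet_superset
  obtain rfl : F.card = d := hpure F hF
  have hA := isPartition_image_coverInterval hpure
  exact ⟨_, hA, (hA.card_eq hF.1 <| forall_mem_image.2 fun c hc =>
    exists_mem_coverInterval hpure hF.1 hc).symm⟩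

end KonigCover

theorem statement3_general (P : Finset Cell) (d : ℕ) :
    (∀ F, IsMaxRookSet P F → F.card = d) ↔
      ∃ A, IsSuperPartition P A ∧ A.card = d := by
  refine ⟨fun hpure => ?_, fun ⟨A, hA, hcard⟩ => hcard ▸ hA.isRookPure⟩
  obtain ⟨A, hA, hcard⟩ := IsRookPure.exists_isPartition_card_eq hpure
  exact ⟨A, IsRookPure.isSuperPartition hpure hA hcard, hcard⟩

/-- The rook complex of `P` is pure of dimension `d - 1` iff `P` admits a super
partition of cardinality `d`. -/
theorem statement3 (P : Finset Cell) (hP : IsPolyomino P) (d : ℕ) (hd : 1 ≤ d) :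
    (∀ F, IsMaxRookSet P F → F.card = d) ↔
      ∃ A, IsSuperPartition P A ∧ A.card = d :=
  statement3_general P d
end

section
/- Let P be a polyomino and let γ be an induced cycle of the complement graph Ḡ_P. Then the length of γ is 3, 4 or 6; in particular Ḡ_P has no induced cycle of length 5 and none of length ≥ 7. -/
/-!
Consecutive cells of the cycle do not attack each other and all other pairs do. Two cells
that are attacked by a common cell `c` but not by each other are attacked by `c` in different
directions, so the direction (row or column) in which cell `i` attacks cell `i + k` alternates
with `k`. Comparing the alternation seen from `i` with the one seen from `i + k` shows that the
length is even. If it is at least `8`, the cells `0, 3, 6` attack pairwise, with `0, 3` and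
`3, 6` attacking in the same direction and `0, 6` in the other one, which is impossible.
-/

open Finset

section Intervals

variable {P I J : Finset Cell} {a b c : Cell}

lemma IsHSeg.snd_eq (h : IsHSeg I) (ha : a ∈ I) (hb : b ∈ I) : a.2 = b.2 := by
  obtain ⟨y, _, _, -, rfl⟩ := h
  simp only [mem_image] at ha hb
  obtain ⟨_, -, rfl⟩ := ha
  obtain ⟨_, -, rfl⟩ := hb
  rfl

lemma IsVSeg.fst_eq (h : IsVSeg I) (ha : a ∈ I) (hb : b ∈ I) : a.1 = b.1 := by
  obtain ⟨x, _, _, -, rfl⟩ := h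
  simp only [mem_image] at ha hb
  obtain ⟨_, -, rfl⟩ := ha
  obtain ⟨_, -, rfl⟩ := hb
  rfl

lemma image_Icc_union_image_Icc {φ : ℤ → Cell} (hφ : Function.Injective φ) {a₁ b₁ a₂ b₂ : ℤ}
    (h : ((Icc a₁ b₁).image φ ∩ (Icc a₂ b₂).image φ).Nonempty) :
    (Icc a₁ b₁).image φ ∪ (Icc a₂ b₂).image φ = (Icc (min a₁ a₂) (max b₁ b₂)).image φ := by
  rw [← image_inter_of_injOn _ _ hφ.injOn, image_nonempty] at h
  obtain ⟨x, hx⟩ := h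
  rw [← image_union]
  congr 1
  ext z
  simp only [mem_inter, mem_union, mem_Icc] at hx ⊢
  omega

lemma IsHSeg.union (hI : IsHSeg I) (hJ : IsHSeg J) (h : (I ∩ J).Nonempty) : IsHSeg (I ∪ J) := by
  obtain ⟨c, hc⟩ := h
  obtain ⟨y₁, a₁, b₁, hab₁, rfl⟩ := hI
  obtain ⟨y₂, a₂, b₂, hab₂, rfl⟩ := hJ
  obtain rfl : y₁ = y₂ := by
    simp only [mem_inter, mem_image] at hc
    obtain ⟨⟨_, -, rfl⟩, ⟨_, -, h⟩⟩ := hc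
    exact (congrArg Prod.snd h).symm
  exact ⟨y₁, _, _, by omega, image_Icc_union_image_Icc (Prod.mk_left_injective y₁) ⟨c, hc⟩⟩

lemma IsVSeg.union (hI : IsVSeg I) (hJ : IsVSeg J) (h : (I ∩ J).Nonempty) : IsVSeg (I ∪ J) := by
  obtain ⟨c, hc⟩ := h
  obtain ⟨x₁, a₁, b₁, hab₁, rfl⟩ := hI
  obtain ⟨x₂, a₂, b₂, hab₂, rfl⟩ := hJ
  obtain rfl : x₁ = x₂ := by
    simp only [mem_inter, mem_image] at hc
    obtain ⟨⟨_, -, rfl⟩, ⟨_, -, h⟩⟩ := hc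
    exact (congrArg Prod.fst h).symm
  exact ⟨x₁, _, _, by omega, image_Icc_union_image_Icc (Prod.mk_right_injective x₁) ⟨c, hc⟩⟩

lemma IsMaxHInterval.eq_of_mem (hI : IsMaxHInterval P I) (hJ : IsMaxHInterval P J)
    (haI : a ∈ I) (haJ : a ∈ J) : I = J := by
  have hU := hI.1.union hJ.1 ⟨a, mem_inter.2 ⟨haI, haJ⟩⟩
  have hUP := union_subset hI.2.1 hJ.2.1
  exact (hI.2.2 _ hU hUP subset_union_left).symm.trans (hJ.2.2 _ hU hUP subset_union_right)

lemma IsMaxVInterval.eq_of_mem (hI : IsMaxVInterval P I) (hJ : IsMaxVInterval P J)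
    (haI : a ∈ I) (haJ : a ∈ J) : I = J := by
  have hU := hI.1.union hJ.1 ⟨a, mem_inter.2 ⟨haI, haJ⟩⟩
  have hUP := union_subset hI.2.1 hJ.2.1
  exact (hI.2.2 _ hU hUP subset_union_left).symm.trans (hJ.2.2 _ hU hUP subset_union_right)

lemma Attacks.fst_eq_of_snd_ne (h : Attacks P a b) (hne : a.2 ≠ b.2) : a.1 = b.1 := by
  obtain ⟨-, I, hI | hI, ha, hb⟩ := h
  · exact absurd (hI.1.snd_eq ha hb) hne
  · exact hI.1.fst_eq ha hb

-- The row interval through `a` is unique, and `a` cannot share both its row and its column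
-- with `c ≠ a`.
lemma snd_eq_iff_snd_ne_of_attacks (hab : Attacks P a b) (hac : Attacks P a c)
    (hbc : ¬ Attacks P b c) (hne : b ≠ c) : a.2 = b.2 ↔ a.2 ≠ c.2 := by
  obtain ⟨hab', I, hI | hI, haI, hbI⟩ := hab <;> obtain ⟨hac', J, hJ | hJ, haJ, hcJ⟩ := hac
  · obtain rfl := hI.eq_of_mem hJ haI haJ
    exact absurd ⟨hne, I, Or.inl hI, hbI, hcJ⟩ hbc
  · exact iff_of_true (hI.1.snd_eq haI hbI) fun h => hac' (Prod.ext (hJ.1.fst_eq haJ hcJ) h)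
  · exact iff_of_false (fun h => hab' (Prod.ext (hI.1.fst_eq haI hbI) h))
      (not_not.2 (hJ.1.snd_eq haJ hcJ))
  · obtain rfl := hI.eq_of_mem hJ haI haJ
    exact absurd ⟨hne, I, Or.inr hI, hbI, hcJ⟩ hbc

lemma snd_eq_iff_of_attacks_of_attacks (hab : Attacks P a b) (hbc : Attacks P b c) (hac : a ≠ c)
    (h : a.2 = b.2 ↔ b.2 = c.2) : a.2 = c.2 ↔ a.2 = b.2 := by
  by_cases hr : a.2 = b.2
  · exact iff_of_true (hr.trans (h.1 hr)) hr
  · have hr' : b.2 ≠ c.2 := fun e => hr (h.2 e)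
    refine iff_of_false (fun e => hac (Prod.ext ?_ e)) hr
    exact (hab.fst_eq_of_snd_ne hr).trans (hbc.fst_eq_of_snd_ne hr')

end Intervals

section Alternation

variable {n : ℕ} {R : ZMod n → ZMod n → Prop}

-- `R i j` is to be read as "cells `i` and `j` of the cycle lie in the same row".
def IsAlternating (R : ZMod n → ZMod n → Prop) : Prop :=
  ∀ (i : ZMod n) (k : ℕ), 2 ≤ k → k + 3 ≤ n → (R i (i + k) ↔ ¬ R i (i + k + 1))

lemma iff_even_of_alternating
    (halt : IsAlternating R)
    (i : ZMod n) {k : ℕ} (hk : 2 ≤ k) (hkn : k + 2 ≤ n) :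
    R i (i + k) ↔ (R i (i + 2) ↔ Even k) := by
  induction k, hk using Nat.le_induction with
  | base => simp
  | succ k hk ih =>
    have h₁ := halt i k hk (by omega)
    have h₂ := ih (by omega)
    rw [Nat.cast_succ, ← add_assoc, Nat.even_add_one]
    tauto

lemma shift_iff_of_alternating
    (halt : IsAlternating R)
    (hsymm : ∀ i j, R i j → R j i) (i : ZMod n) {k : ℕ} (hk : 2 ≤ k) (hkn : k + 2 ≤ n) :
    R (i + k) (i + k + 2) ↔ (R i (i + 2) ↔ Even n) := by
  have h₁ := iff_even_of_alternating halt i hk hkn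
  have h₂ := iff_even_of_alternating halt (i + k) (k := n - k) (by omega) (by omega)
  rw [add_assoc, ← Nat.cast_add, Nat.add_sub_cancel' (by omega), ZMod.natCast_self, add_zero,
    Nat.even_sub (by omega)] at h₂
  have h₃ : R i (i + k) ↔ R (i + k) i := ⟨hsymm _ _, hsymm _ _⟩
  tauto

lemma even_of_alternating
    (halt : IsAlternating R)
    (hsymm : ∀ i j, R i j → R j i) (hn : 5 ≤ n) : Even n := by
  by_contra hodd
  have hstep : ∀ i : ZMod n, R (i + 1) (i + 1 + 2) ↔ R i (i + 2) := by
    intro i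
    have h₁ := shift_iff_of_alternating halt hsymm i (k := 3) (by omega) (by omega)
    have h₂ := shift_iff_of_alternating halt hsymm (i + 1) (k := 2) le_rfl (by omega)
    rw [show i + 1 + ((2 : ℕ) : ZMod n) = i + (3 : ℕ) by push_cast; ring] at h₂
    tauto
  have h₀ := shift_iff_of_alternating halt hsymm 0 (k := 2) le_rfl (by omega)
  have h₁ := hstep 0
  have h₂ := hstep 1
  rw [show (1 : ZMod n) + 1 = 2 by ring] at h₂
  simp only [Nat.cast_ofNat, zero_add] at h₀ h₁
  tauto

lemma triangle_of_alternating
    (halt : IsAlternating R)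
    (hsymm : ∀ i j, R i j → R j i) (hev : Even n) (hn : 8 ≤ n) :
    (R 0 3 ↔ R 3 6) ∧ (R 0 6 ↔ ¬ R 0 3) := by
  have h₀₃ := iff_even_of_alternating halt 0 (k := 3) (by omega) (by omega)
  have h₃₆ := iff_even_of_alternating halt 3 (k := 3) (by omega) (by omega)
  have h₀₆ := iff_even_of_alternating halt 0 (k := 6) (by omega) (by omega)
  have h₃ := shift_iff_of_alternating halt hsymm 0 (k := 3) (by omega) (by omega)
  have h₆ : (3 : ZMod n) + 3 = 6 := by norm_num
  have h₅ : (3 : ZMod n) + 2 = 5 := by norm_num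
  simp only [Nat.cast_ofNat, zero_add, h₆, h₅] at h₀₃ h₃₆ h₀₆ h₃
  have h₃odd : ¬ Even 3 := by decide
  have h₆even : Even 6 := by decide
  simp only [h₃odd, h₆even, hev, iff_true, iff_false] at h₀₃ h₃₆ h₀₆ h₃
  rw [h₀₃, h₃₆, h₀₆, h₃, not_not]
  exact ⟨Iff.rfl, Iff.rfl⟩

end Alternation

lemma ZMod.natCast_ne_zero_of_pos_of_lt {n k : ℕ} (h₀ : 0 < k) (hk : k < n) :
    (k : ZMod n) ≠ 0 := by
  rw [Ne, ZMod.natCast_eq_zero_iff]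
  exact Nat.not_dvd_of_pos_of_lt h₀ hk

lemma ZMod.ne_add_natCast_of_pos_of_lt {n l : ℕ} (i : ZMod n) (h₀ : 0 < l) (hl : l < n) :
    i ≠ i + l :=
  fun h => ZMod.natCast_ne_zero_of_pos_of_lt h₀ hl (left_eq_add.1 h)

section AttackCycle

variable {P : Finset Cell} {n : ℕ}

lemma exists_attack_cycle_of_hasInducedCycle (h : HasInducedCycle (GBar P) n) :
    ∃ g : ZMod n → Cell, Function.Injective g ∧
      ∀ i j, i ≠ j → (Attacks P (g i) (g j) ↔ ¬ (i = j + 1 ∨ j = i + 1)) := by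
  obtain ⟨-, f, hinj, hadj⟩ := h
  refine ⟨fun i => f i, Subtype.val_injective.comp hinj, fun i j hij => ?_⟩
  rw [← hadj, GBar, SimpleGraph.compl_adj]
  simp only [GP, ne_eq, hinj.ne hij, not_false_eq_true, true_and, not_not]

lemma attacks_add_natCast {g : ZMod n → Cell}
    (hcyc : ∀ i j, i ≠ j → (Attacks P (g i) (g j) ↔ ¬ (i = j + 1 ∨ j = i + 1)))
    (i : ZMod n) {k : ℕ} (hk : 2 ≤ k) (hkn : k + 2 ≤ n) : Attacks P (g i) (g (i + k)) := by
  obtain ⟨m, rfl⟩ : ∃ m, k = m + 1 := ⟨k - 1, by omega⟩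
  have hne : ∀ l : ℕ, 0 < l → l < n → i ≠ i + l := fun _ => ZMod.ne_add_natCast_of_pos_of_lt i
  refine (hcyc _ _ (hne _ (by omega) (by omega))).2 ?_
  rintro (h | h)
  · exact hne (m + 2) (by omega) (by omega) (by push_cast at h ⊢; linear_combination h)
  · exact hne m (by omega) (by omega) (by push_cast at h; linear_combination -h)

lemma eq_six_of_attack_cycle {g : ZMod n → Cell} (hg : Function.Injective g)
    (hcyc : ∀ i j, i ≠ j → (Attacks P (g i) (g j) ↔ ¬ (i = j + 1 ∨ j = i + 1)))
    (hn : 5 ≤ n) : n = 6 := by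
  have hsucc : ∀ i : ZMod n, i ≠ i + 1 := fun i => by
    simpa using ZMod.ne_add_natCast_of_pos_of_lt i (l := 1) one_pos (by omega)
  have hnext : ∀ i, ¬ Attacks P (g i) (g (i + 1)) := fun i =>
    (hcyc _ _ (hsucc i)).not.2 (not_not.2 (Or.inr rfl))
  have halt : IsAlternating fun i j : ZMod n => (g i).2 = (g j).2 := by
    intro i k hk hkn
    have h := attacks_add_natCast hcyc i (k := k + 1) (by omega) (by omega)
    rw [Nat.cast_succ, ← add_assoc] at h
    exact snd_eq_iff_snd_ne_of_attacks (attacks_add_natCast hcyc i hk (by omega)) h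
      (hnext _) (hg.ne (hsucc _))
  have hsymm : ∀ i j : ZMod n, (g i).2 = (g j).2 → (g j).2 = (g i).2 := fun _ _ => Eq.symm
  have hev := even_of_alternating halt hsymm hn
  by_contra h6
  have h8 : 8 ≤ n := by obtain ⟨m, rfl⟩ := hev; omega
  obtain ⟨h₁, h₂⟩ := triangle_of_alternating halt hsymm hev h8
  have h₀₃ := attacks_add_natCast hcyc 0 (k := 3) (by omega) (by omega)
  have h₃₆ := attacks_add_natCast hcyc 3 (k := 3) (by omega) (by omega)
  have h₀₆ := ZMod.ne_add_natCast_of_pos_of_lt (0 : ZMod n) (l := 6) (by omega) (by omega)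
  simp only [Nat.cast_ofNat, zero_add, show (3 : ZMod n) + 3 = 6 by norm_num] at h₀₃ h₃₆ h₀₆
  exact iff_not_self ((snd_eq_iff_of_attacks_of_attacks h₀₃ h₃₆ (hg.ne h₀₆) h₁).symm.trans h₂)

end AttackCycle

theorem statement5_general (P : Finset Cell) (n : ℕ)
    (h : HasInducedCycle (GBar P) n) : n = 3 ∨ n = 4 ∨ n = 6 := by
  obtain ⟨g, hg, hcyc⟩ := exists_attack_cycle_of_hasInducedCycle h
  by_cases hn : 5 ≤ n
  · exact Or.inr (Or.inr (eq_six_of_attack_cycle hg hcyc hn))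
  · have := h.1
    omega

/-- Every induced cycle of the complement graph of a polyomino has length 3, 4 or 6. -/
theorem statement5 (P : Finset Cell) (hP : IsPolyomino P) (n : ℕ)
    (h : HasInducedCycle (GBar P) n) : n = 3 ∨ n = 4 ∨ n = 6 :=
  statement5_general P n h
end

section
/- Let P be a polyomino whose complement graph Ḡ_P is chordal. Then any two cells of P are joined by a path of cells of P having at most 2 changes of direction. -/
/-!
Two distinct cells of `P` attack each other exactly when a straight run of cells of `P` along a
row or a column joins them, so `G_P` is the graph of rook moves inside `P`; it is connected
because `P` is. An induced 4-cycle of `Ḡ_P` is a pair of disjoint edges of `G_P` with no edge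
between them, and the first and last moves of a shortest rook path with at least four moves
would be such a pair. Hence chordality of `Ḡ_P` brings any two cells within three rook moves;
merging consecutive collinear moves leaves a row–column–row or column–row–column route, which
is traced by a cell path turning at most twice. The second case is the first one transposed.
-/

lemma Finset.exists_maximal_superset {α : Type*} {p : Finset α → Prop}
    {P J : Finset α} (hJ : p J) (hJP : J ⊆ P) :
    ∃ I, p I ∧ I ⊆ P ∧ J ⊆ I ∧ ∀ I', p I' → I' ⊆ P → I ⊆ I' → I' = I := by
  classical
  obtain ⟨I, hJI, hI⟩ := (P.powerset.filter p).exists_le_maximal (a := J) (by simp [hJ, hJP])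
  simp only [Finset.mem_filter, Finset.mem_powerset] at hI
  exact ⟨I, hI.1.2, hI.1.1, hJI, fun I' hI' hI'P hII' =>
    le_antisymm (hI.2 ⟨hI'P, hI'⟩ hII') hII'⟩

def RowConnected (P : Finset Cell) (a b : Cell) : Prop :=
  a.2 = b.2 ∧ ∀ x ∈ Finset.uIcc a.1 b.1, (x, a.2) ∈ P

def ColConnected (P : Finset Cell) (a b : Cell) : Prop :=
  a.1 = b.1 ∧ ∀ y ∈ Finset.uIcc a.2 b.2, (a.1, y) ∈ P

section Connected

variable {P : Finset Cell} {a b c : Cell}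

lemma RowConnected.refl (ha : a ∈ P) : RowConnected P a a :=
  ⟨rfl, fun x hx => by rw [Finset.uIcc_self, Finset.mem_singleton] at hx; subst hx; exact ha⟩

lemma ColConnected.refl (ha : a ∈ P) : ColConnected P a a :=
  ⟨rfl, fun y hy => by rw [Finset.uIcc_self, Finset.mem_singleton] at hy; subst hy; exact ha⟩

lemma RowConnected.trans (hab : RowConnected P a b) (hbc : RowConnected P b c) :
    RowConnected P a c := by
  refine ⟨hab.1.trans hbc.1, fun x hx => ?_⟩
  rcases Finset.mem_union.1 (Finset.uIcc_subset_uIcc_union_uIcc hx) with hx | hx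
  · exact hab.2 x hx
  · exact hab.1 ▸ hbc.2 x hx

lemma ColConnected.trans (hab : ColConnected P a b) (hbc : ColConnected P b c) :
    ColConnected P a c := by
  refine ⟨hab.1.trans hbc.1, fun y hy => ?_⟩
  rcases Finset.mem_union.1 (Finset.uIcc_subset_uIcc_union_uIcc hy) with hy | hy
  · exact hab.2 y hy
  · exact hab.1 ▸ hbc.2 y hy

lemma RowConnected.mem_right (h : RowConnected P a b) : b ∈ P := by
  simpa [h.1] using h.2 b.1 Finset.right_mem_uIcc

lemma ColConnected.mem_right (h : ColConnected P a b) : b ∈ P := by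
  simpa [h.1] using h.2 b.2 Finset.right_mem_uIcc

lemma RowConnected.attacks (h : RowConnected P a b) (hne : a ≠ b) : Attacks P a b := by
  classical
  obtain ⟨I, hI, hIP, hJI, hmax⟩ := Finset.exists_maximal_superset (p := IsHSeg)
    ⟨a.2, _, _, inf_le_sup, rfl⟩
    (Finset.image_subset_iff.2 h.2)
  refine ⟨hne, I, Or.inl ⟨hI, hIP, hmax⟩, hJI ?_, hJI ?_⟩
  · exact Finset.mem_image.2 ⟨a.1, Finset.left_mem_uIcc, rfl⟩
  · exact Finset.mem_image.2 ⟨b.1, Finset.right_mem_uIcc, by rw [h.1]⟩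

lemma ColConnected.attacks (h : ColConnected P a b) (hne : a ≠ b) : Attacks P a b := by
  classical
  obtain ⟨I, hI, hIP, hJI, hmax⟩ := Finset.exists_maximal_superset (p := IsVSeg)
    ⟨a.1, _, _, inf_le_sup, rfl⟩
    (Finset.image_subset_iff.2 h.2)
  refine ⟨hne, I, Or.inr ⟨hI, hIP, hmax⟩, hJI ?_, hJI ?_⟩
  · exact Finset.mem_image.2 ⟨a.2, Finset.left_mem_uIcc, rfl⟩
  · exact Finset.mem_image.2 ⟨b.2, Finset.right_mem_uIcc, by rw [h.1]⟩

lemma Attacks.rowConnected_or_colConnected (h : Attacks P a b) :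
    RowConnected P a b ∨ ColConnected P a b := by
  obtain ⟨-, I, ⟨⟨y, lo, hi, -, rfl⟩, hIP, -⟩ | ⟨⟨x, lo, hi, -, rfl⟩, hIP, -⟩, ha, hb⟩ := h
  · simp only [Finset.mem_image, Finset.mem_Icc] at ha hb
    obtain ⟨xa, hxa, rfl⟩ := ha
    obtain ⟨xb, hxb, rfl⟩ := hb
    refine .inl ⟨rfl, fun x hx => hIP (Finset.mem_image.2 ⟨x, Finset.mem_Icc.2 ?_, rfl⟩)⟩
    rw [Finset.mem_uIcc] at hx
    omega
  · simp only [Finset.mem_image, Finset.mem_Icc] at ha hb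
    obtain ⟨ya, hya, rfl⟩ := ha
    obtain ⟨yb, hyb, rfl⟩ := hb
    refine .inr ⟨rfl, fun y hy => hIP (Finset.mem_image.2 ⟨y, Finset.mem_Icc.2 ?_, rfl⟩)⟩
    rw [Finset.mem_uIcc] at hy
    omega

lemma Adjacent.attacks (h : Adjacent a b) (ha : a ∈ P) (hb : b ∈ P) : Attacks P a b := by
  have hne : a ≠ b := by rintro rfl; rcases h with ⟨-, h⟩ | ⟨-, h⟩ <;> omega
  have two_cells : ∀ {s t : ℤ} {f : ℤ → Cell}, (s = t + 1 ∨ t = s + 1) → f s ∈ P → f t ∈ P →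
      ∀ z ∈ Finset.uIcc s t, f z ∈ P := by
    intro s t f hst hs ht z hz
    rw [Finset.mem_uIcc] at hz
    obtain rfl | rfl : z = s ∨ z = t := by omega
    exacts [hs, ht]
  rcases h with ⟨h1, h2⟩ | ⟨h1, h2⟩
  · exact ColConnected.attacks ⟨h1, two_cells (f := (a.1, ·)) h2 ha (h1 ▸ hb)⟩ hne
  · exact RowConnected.attacks ⟨h1, two_cells (f := (·, a.2)) h2 ha (h1 ▸ hb)⟩ hne

end Connected

lemma IsPolyomino.reachable {P : Finset Cell} (hP : IsPolyomino P) {c d : Cell} (hc : c ∈ P)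
    (hd : d ∈ P) : (GP P).Reachable ⟨c, hc⟩ ⟨d, hd⟩ := by
  induction hP.2 c hc d hd with
  | refl => rfl
  | tail _ hst ih =>
    exact (ih hst.2.1).trans (SimpleGraph.Adj.reachable (hst.1.attacks hst.2.1 hst.2.2))

section InducedCycle

variable {V : Type*} {G : SimpleGraph V}

lemma hasInducedCycle_four {a b c d : V} (hab : G.Adj a b) (hbc : G.Adj b c) (hcd : G.Adj c d)
    (hda : G.Adj d a) (hac : ¬ G.Adj a c) (hbd : ¬ G.Adj b d) (hac' : a ≠ c) (hbd' : b ≠ d) :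
    HasInducedCycle G 4 := by
  have four : ∀ i : ZMod 4, i = 0 ∨ i = 1 ∨ i = 2 ∨ i = 3 := by decide
  refine ⟨by norm_num, ![a, b, c, d], fun i j hij => ?_, fun i j => ?_⟩
  · rcases four i with rfl | rfl | rfl | rfl <;> rcases four j with rfl | rfl | rfl | rfl <;>
      simp [hab.ne, hbc.ne, hcd.ne, hda.ne, hab.ne.symm, hbc.ne.symm, hcd.ne.symm, hda.ne.symm,
        hac', hbd', hac'.symm, hbd'.symm] at hij ⊢
  · rcases four i with rfl | rfl | rfl | rfl <;> rcases four j with rfl | rfl | rfl | rfl <;>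
      simp +decide [hab, hbc, hcd, hda, hac, hbd, hab.symm, hbc.symm, hcd.symm, hda.symm,
        G.adj_comm c a, G.adj_comm d b]

lemma dist_le_three_of_not_hasInducedCycle_compl (hG : ¬ HasInducedCycle Gᶜ 4) {u v : V}
    (huv : G.Reachable u v) : G.dist u v ≤ 3 := by
  obtain ⟨p, hp⟩ := huv.exists_walk_length_eq_dist
  by_contra! hlong
  have long (q : G.Walk u v) : 3 < q.length := hlong.trans_le (SimpleGraph.dist_le q)
  set a := p.getVert 1
  set b := p.getVert (p.length - 1)
  have hua : G.Adj u a := by simpa using p.adj_getVert_succ (i := 0) (by omega)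
  have hbv : G.Adj b v := by
    simpa [Nat.sub_add_cancel (by omega : 1 ≤ p.length)] using
      p.adj_getVert_succ (i := p.length - 1) (by omega)
  have hub : ¬ G.Adj u b := fun h => by simpa using long (.cons h hbv.toWalk)
  have hab : ¬ G.Adj a b := fun h => by simpa using long (.cons hua (.cons h hbv.toWalk))
  have hav : ¬ G.Adj a v := fun h => by simpa using long (.cons hua h.toWalk)
  have huv' : ¬ G.Adj u v := fun h => by simpa using long h.toWalk
  have hub' : u ≠ b := fun h => huv' (h ▸ hbv)
  have hab' : a ≠ b := fun h => hav (h ▸ hbv)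
  have hav' : a ≠ v := fun h => huv' (h ▸ hua)
  have huv'' : u ≠ v := by rintro rfl; simpa using long .nil
  have compl {x y : V} (hxy : x ≠ y) (h : ¬ G.Adj x y) : Gᶜ.Adj x y := (G.compl_adj x y).2 ⟨hxy, h⟩
  have not_compl {x y : V} (h : G.Adj x y) : ¬ Gᶜ.Adj x y := fun h' => ((G.compl_adj x y).1 h').2 h
  exact hG (hasInducedCycle_four (a := u) (b := b) (c := a) (d := v) (compl hub' hub)
    (compl hab'.symm (hab ·.symm)) (compl hav' hav) (compl huv''.symm (huv' ·.symm))
    (not_compl hua) (not_compl hbv) hua.ne hbv.ne)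

end InducedCycle

def RowColRow (P : Finset Cell) (c d : Cell) : Prop :=
  ∃ u v, RowConnected P c u ∧ ColConnected P u v ∧ RowConnected P v d

def ColRowCol (P : Finset Cell) (c d : Cell) : Prop :=
  ∃ u v, ColConnected P c u ∧ RowConnected P u v ∧ ColConnected P v d

section ThreeMoves

variable {P : Finset Cell}

lemma rowColRow_or_colRowCol {c x y d : Cell} (h₁ : RowConnected P c x ∨ ColConnected P c x)
    (h₂ : RowConnected P x y ∨ ColConnected P x y)
    (h₃ : RowConnected P y d ∨ ColConnected P y d) : RowColRow P c d ∨ ColRowCol P c d := by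
  have hd : d ∈ P := h₃.elim RowConnected.mem_right ColConnected.mem_right
  rcases h₁ with h₁ | h₁ <;> rcases h₂ with h₂ | h₂ <;> rcases h₃ with h₃ | h₃
  · exact .inl ⟨d, d, (h₁.trans h₂).trans h₃, .refl hd, .refl hd⟩
  · exact .inl ⟨y, d, h₁.trans h₂, h₃, .refl hd⟩
  · exact .inl ⟨x, y, h₁, h₂, h₃⟩
  · exact .inl ⟨x, d, h₁, h₂.trans h₃, .refl hd⟩
  · exact .inr ⟨x, d, h₁, h₂.trans h₃, .refl hd⟩
  · exact .inr ⟨x, y, h₁, h₂, h₃⟩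
  · exact .inr ⟨y, d, h₁.trans h₂, h₃, .refl hd⟩
  · exact .inr ⟨d, d, (h₁.trans h₂).trans h₃, .refl hd, .refl hd⟩

lemma rowColRow_or_colRowCol_of_walk {c d : P} (p : (GP P).Walk c d) (hp : p.length ≤ 3) :
    RowColRow P c d ∨ ColRowCol P c d :=
  have move {x y : P} (h : (GP P).Adj x y) : RowConnected P x y ∨ ColConnected P x y :=
    Attacks.rowConnected_or_colConnected h
  have stay (x : P) : RowConnected P x x ∨ ColConnected P x x := .inl (.refl x.2)
  match p, hp with
  | .nil, _ => rowColRow_or_colRowCol (stay c) (stay c) (stay c)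
  | .cons h .nil, _ => rowColRow_or_colRowCol (move h) (stay d) (stay d)
  | .cons h₁ (.cons h₂ .nil), _ => rowColRow_or_colRowCol (move h₁) (move h₂) (stay d)
  | .cons h₁ (.cons h₂ (.cons h₃ .nil)), _ => rowColRow_or_colRowCol (move h₁) (move h₂) (move h₃)
  | .cons _ (.cons _ (.cons _ (.cons _ _))), hp => absurd hp (by simp)

end ThreeMoves

def JoinedByTwoTurnPath (P : Finset Cell) (c d : Cell) : Prop :=
  ∃ l : List Cell, IsCellPath P l ∧ l.head? = some c ∧ l.getLast? = some d ∧ dirChanges l ≤ 2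

section Paths

variable {P : Finset Cell}

lemma isCellPath_map_range {g : ℕ → Cell} {N : ℕ}
    (hinj : ∀ i ≤ N, ∀ j ≤ N, g i = g j → i = j) (hmem : ∀ i ≤ N, g i ∈ P)
    (hadj : ∀ i < N, Adjacent (g i) (g (i + 1))) :
    IsCellPath P ((List.range (N + 1)).map g) := by
  refine ⟨List.Nodup.map_on ?_ List.nodup_range, ?_, ?_⟩
  · simpa only [List.mem_range, Nat.lt_succ_iff] using hinj
  · simpa [Nat.lt_succ_iff] using hmem
  · change List.IsChain Adjacent _
    rw [List.isChain_map, List.isChain_range_succ]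
    exact hadj

lemma dirChanges_map_range_le {g : ℕ → Cell} {N : ℕ} {T : Finset ℕ}
    (hT : ∀ k, 1 ≤ k → k < N → (g (k - 1)).1 ≠ (g (k + 1)).1 →
      (g (k - 1)).2 ≠ (g (k + 1)).2 → k ∈ T) :
    dirChanges ((List.range (N + 1)).map g) ≤ T.card := by
  refine Finset.card_le_card fun k hk => ?_
  simp only [Finset.mem_filter, Finset.mem_Ico, List.length_map, List.length_range] at hk
  obtain ⟨⟨hk1, hkN⟩, hx, hy⟩ := hk
  simp only [List.getD_eq_getElem?_getD, List.getElem?_map, List.getElem?_range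
    (show k - 1 < N + 1 by omega), List.getElem?_range (show k + 1 < N + 1 by omega),
    Option.map_some, Option.getD_some] at hx hy
  exact hT k hk1 (by omega) hx hy

lemma joinedByTwoTurnPath_of_map_range {g : ℕ → Cell} {N s t : ℕ}
    (hinj : ∀ i ≤ N, ∀ j ≤ N, g i = g j → i = j) (hmem : ∀ i ≤ N, g i ∈ P)
    (hadj : ∀ i < N, Adjacent (g i) (g (i + 1)))
    (hturn : ∀ k, 1 ≤ k → k < N → (g (k - 1)).1 ≠ (g (k + 1)).1 →
      (g (k - 1)).2 ≠ (g (k + 1)).2 → k = s ∨ k = t) :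
    JoinedByTwoTurnPath P (g 0) (g N) := by
  refine ⟨(List.range (N + 1)).map g, isCellPath_map_range hinj hmem hadj, ?_, ?_,
    (dirChanges_map_range_le (T := {s, t}) ?_).trans Finset.card_le_two⟩
  · simp [List.range_succ_eq_map]
  · simp [List.getLast?_eq_getElem?]
  · simpa only [Finset.mem_insert, Finset.mem_singleton] using hturn

/-- The coordinate reached from `a` by `n` unit steps toward `b`, stopping at `b`. -/
def stepToward (a b n : ℤ) : ℤ := max (min (a + n) b) (a - n)

-- If `u = v ≠ d`, the first and third legs would lie in one row and could overlap.
lemma joinedByTwoTurnPath_of_rowColRow_legs {c u v d : Cell}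
    (h₁ : RowConnected P c u) (h₂ : ColConnected P u v) (h₃ : RowConnected P v d)
    (huv : u ≠ v ∨ v = d) : JoinedByTwoTurnPath P c d := by
  obtain ⟨hcu, h₁⟩ := h₁
  obtain ⟨huv₁, h₂⟩ := h₂
  obtain ⟨hvd, h₃⟩ := h₃
  set A := (u.1 - c.1).natAbs
  set B := (v.2 - u.2).natAbs
  set C := (d.1 - v.1).natAbs
  have hBC : 0 < B ∨ C = 0 := by
    rcases huv with huv | rfl
    · exact .inl (by by_contra; exact huv (Prod.ext huv₁ (by omega)))
    · exact .inr (by omega)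
  let g : ℕ → Cell := fun i =>
    if i ≤ A then (stepToward c.1 u.1 i, c.2)
    else if i ≤ A + B then (u.1, stepToward u.2 v.2 (i - A : ℕ))
    else (stepToward v.1 d.1 (i - (A + B) : ℕ), d.2)
  have hg₀ : g 0 = c := by
    simp only [g, if_pos (Nat.zero_le A), stepToward]
    ext <;> omega
  have hgN : g (A + B + C) = d := by
    simp only [g, stepToward]
    split_ifs <;> ext <;> simp only <;> omega
  rw [← hg₀, ← hgN]
  refine joinedByTwoTurnPath_of_map_range (s := A) (t := A + B) ?_ ?_ ?_ ?_
  · intro i _ j _ hij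
    simp only [g, stepToward] at hij
    split_ifs at hij <;> simp only [Prod.mk.injEq] at hij <;> omega
  · intro i hi
    simp only [g]
    split_ifs
    · exact h₁ _ (by simp only [Finset.mem_uIcc, stepToward]; omega)
    · exact h₂ _ (by simp only [Finset.mem_uIcc, stepToward]; omega)
    · exact hvd ▸ h₃ _ (by simp only [Finset.mem_uIcc, stepToward]; omega)
  · intro i _
    simp only [Adjacent, g, stepToward]
    split_ifs <;> omega
  · intro k _ _ hx hy
    simp only [g, stepToward] at hx hy
    split_ifs at hx hy <;> simp only at hx hy <;> omega

end Paths

section Transpose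

variable {P : Finset Cell} {a b : Cell}

lemma RowConnected.swap (h : RowConnected P a b) :
    ColConnected (P.image Prod.swap) a.swap b.swap :=
  ⟨h.1, fun x hx => Finset.mem_image.2 ⟨(x, a.2), h.2 x hx, rfl⟩⟩

lemma ColConnected.swap (h : ColConnected P a b) :
    RowConnected (P.image Prod.swap) a.swap b.swap :=
  ⟨h.1, fun y hy => Finset.mem_image.2 ⟨(a.1, y), h.2 y hy, rfl⟩⟩

lemma Adjacent.swap (h : Adjacent a b) : Adjacent a.swap b.swap := h.symm

lemma dirChanges_map_swap (l : List Cell) : dirChanges (l.map Prod.swap) = dirChanges l := by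
  simp only [dirChanges, List.length_map]
  refine congrArg Finset.card (Finset.filter_congr fun k _ => ?_)
  rw [show ((0 : ℤ), (0 : ℤ)) = Prod.swap (0, 0) from rfl, List.getD_map, List.getD_map]
  exact and_comm

lemma JoinedByTwoTurnPath.of_image_swap
    (h : JoinedByTwoTurnPath (P.image Prod.swap) a.swap b.swap) : JoinedByTwoTurnPath P a b := by
  obtain ⟨l, ⟨hnodup, hmem, hchain⟩, hhead, hlast, hturns⟩ := h
  refine ⟨l.map Prod.swap, ⟨hnodup.map Prod.swap_injective, ?_, ?_⟩, ?_, ?_, ?_⟩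
  · simp only [List.mem_map]
    rintro _ ⟨x, hx, rfl⟩
    obtain ⟨y, hy, rfl⟩ := Finset.mem_image.1 (hmem x hx)
    exact hy
  · exact (List.isChain_map _).2 (hchain.imp fun _ _ h => h.swap)
  · simp [hhead]
  · simp [List.getLast?_map, hlast]
  · rwa [dirChanges_map_swap]

end Transpose

section Joined

variable {P : Finset Cell} {c d : Cell}

lemma RowColRow.joinedByTwoTurnPath (h : RowColRow P c d) : JoinedByTwoTurnPath P c d := by
  obtain ⟨u, v, h₁, h₂, h₃⟩ := h
  by_cases huv : u = v
  · subst huv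
    have hd := h₃.mem_right
    exact joinedByTwoTurnPath_of_rowColRow_legs (h₁.trans h₃) (.refl hd) (.refl hd)
      (.inr rfl)
  · exact joinedByTwoTurnPath_of_rowColRow_legs h₁ h₂ h₃ (.inl huv)

lemma ColRowCol.joinedByTwoTurnPath (h : ColRowCol P c d) : JoinedByTwoTurnPath P c d := by
  obtain ⟨u, v, h₁, h₂, h₃⟩ := h
  exact .of_image_swap (RowColRow.joinedByTwoTurnPath ⟨_, _, h₁.swap, h₂.swap, h₃.swap⟩)

end Joined

/-- If `Ḡ_P` is chordal, any two cells of `P` are joined by a path of cells of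
`P` with at most 2 changes of direction. -/
theorem statement7 (P : Finset Cell) (hP : IsPolyomino P)
    (hch : IsChordal (GBar P)) (c d : Cell) (hc : c ∈ P) (hd : d ∈ P) :
    ∃ l : List Cell, IsCellPath P l ∧ l.head? = some c ∧ l.getLast? = some d ∧
      dirChanges l ≤ 2 := by
  have hreach := hP.reachable hc hd
  obtain ⟨p, hp⟩ := hreach.exists_walk_length_eq_dist
  have hshort : p.length ≤ 3 :=
    hp ▸ dist_le_three_of_not_hasInducedCycle_compl (hch 4 le_rfl) hreach
  rcases rowColRow_or_colRowCol_of_walk p hshort with h | h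
  exacts [h.joinedByTwoTurnPath, h.joinedByTwoTurnPath]
end
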